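/- arXiv:2111.03278 — 7 statements merged into one kernel-verified Lean document; each statement's English description precedes it below -/
import Mathlib

section
/- Let G be a differentiable convex function on [0,1], and 0 ≤ a ≤ b ≤ 1. For every x ∈ [a,b], the Jensen-Bregman divergence satisfies the reverse triangle inequality: JB_G(a,x) + JB_G(x,b) ≤ JB_G(a,b). -/
open Set

/-- The Jensen-Bregman divergence `JB_G(a,b) = (G(a)+G(b))/2 - G((a+b)/2)`. -/
noncomputable def jensenBregman (G : ℝ → ℝ) (a b : ℝ) : ℝ :=
  (G a + G b)/2 - G ((a + b)/2)

/-- Reverse triangle inequality for the Jensen-Bregman divergence: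
for `x ∈ [a,b]`, `JB_G(a,x) + JB_G(x,b) ≤ JB_G(a,b)`. -/
theorem jensen_bregman_reverse_triangle
    (G : ℝ → ℝ)
    (hGdiff : ∀ x ∈ Ioo (0:ℝ) 1, DifferentiableAt ℝ G x)
    (hGconv : ConvexOn ℝ (Icc (0:ℝ) 1) G)
    (a b : ℝ) (ha : 0 ≤ a) (hab : a ≤ b) (hb : b ≤ 1) :
    ∀ x ∈ Icc a b,
      jensenBregman G a x + jensenBregman G x b ≤ jensenBregman G a b := by
  intro x hx
  obtain ⟨hax, hxb⟩ := hx
  have hx0 : 0 ≤ x := ha.trans hax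
  have hx1 : x ≤ 1 := hxb.trans hb
  set p := (a + x)/2 with hp
  set q := (x + b)/2 with hq
  have hpmem : p ∈ Icc (0:ℝ) 1 := ⟨by simp only [hp]; linarith, by simp only [hp]; linarith⟩
  have hqmem : q ∈ Icc (0:ℝ) 1 := ⟨by simp only [hq]; linarith, by simp only [hq]; linarith⟩
  have hpq : p ≤ q := by simp only [hp, hq]; linarith
  have key : G x + G ((a + b)/2) ≤ G p + G q := by
    rcases eq_or_lt_of_le hpq with heq | hlt
    · have hab' : a = b := by simp only [hp, hq] at heq; linarith
      have hxa : x = a := le_antisymm (hab' ▸ hxb) hax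
      subst hab'
      subst hxa
      have : p = x := by simp only [hp]; ring
      have hq' : q = x := by simp only [hq]; ring
      rw [this, hq']
      have : (x + x)/2 = x := by ring
      rw [this]
    · set t := (q - x)/(q - p) with ht
      have hqp : 0 < q - p := by linarith
      have hpx : p ≤ x := by simp only [hp]; linarith
      have hxq : x ≤ q := by simp only [hq]; linarith
      have ht0 : 0 ≤ t := div_nonneg (by linarith) hqp.le
      have ht1 : t ≤ 1 := by rw [div_le_one hqp]; linarith
      have hsum : t + (1 - t) = 1 := by ring
      have hxeq : t • p + (1 - t) • q = x := by
        simp only [smul_eq_mul, ht]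
        field_simp
        ring
      have hmeq : (1 - t) • p + t • q = (a + b)/2 := by
        simp only [smul_eq_mul, ht]
        have : p + q = x + (a + b)/2 := by simp only [hp, hq]; ring
        field_simp
        nlinarith [this]
      have h1 := hGconv.2 hpmem hqmem ht0 (by linarith : (0:ℝ) ≤ 1 - t) hsum
      have h2 := hGconv.2 hpmem hqmem (by linarith : (0:ℝ) ≤ 1 - t) ht0 (by ring)
      rw [hxeq] at h1
      rw [hmeq] at h2
      simp only [smul_eq_mul] at h1 h2
      linarith
  simp only [jensenBregman, hp, hq] at *
  linarith
end

section
/- Let G be a differentiable convex function on [0,1]. For all a ≤ a' ≤ b' ≤ b in [0,1], JB_G(a', b') ≤ JB_G(a, b), i.e., the Jensen-Bregman divergence is monotone under interval shrinking. -/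
open Set

/-- Slope comparison for convex functions: the secant slope over `[x,y]` is at most
the secant slope over `[u,v]` when `x ≤ u`, `y ≤ v`. -/
lemma slope_le_slope {G : ℝ → ℝ} {s : Set ℝ} (hG : ConvexOn ℝ s G)
    {x y u v : ℝ} (hx : x ∈ s) (hy : y ∈ s) (hu : u ∈ s) (hv : v ∈ s)
    (hxy : x < y) (huv : u < v) (hxu : x ≤ u) (hyv : y ≤ v) :
    (G y - G x) / (y - x) ≤ (G v - G u) / (v - u) := by
  rcases eq_or_lt_of_le hxu with rfl | hxu
  · exact hG.secant_mono hx hy hv hxy.ne' (hxy.trans_le hyv).ne' hyv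
  · have h1 : (G y - G x) / (y - x) ≤ (G v - G x) / (v - x) :=
      hG.secant_mono hx hy hv hxy.ne' (lt_of_lt_of_le (hxy.trans_le hyv) le_rfl).ne' hyv
    have hxv : x < v := hxu.trans huv
    have h2 : (G x - G v) / (x - v) ≤ (G u - G v) / (u - v) :=
      hG.secant_mono hv hx hu hxv.ne huv.ne hxu.le
    have e1 : (G x - G v) / (x - v) = (G v - G x) / (v - x) := by
      rw [← neg_div_neg_eq]; ring_nf
    have e2 : (G u - G v) / (u - v) = (G v - G u) / (v - u) := by
      rw [← neg_div_neg_eq]; ring_nf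
    rw [e1, e2] at h2
    linarith

/-- The Jensen-Bregman divergence is monotone under interval shrinking:
for `a ≤ a' ≤ b' ≤ b` in `[0,1]`, `JB_G(a', b') ≤ JB_G(a, b)`. -/
theorem jensen_bregman_mono
    (G : ℝ → ℝ)
    (hGdiff : ∀ x ∈ Ioo (0:ℝ) 1, DifferentiableAt ℝ G x)
    (hGconv : ConvexOn ℝ (Icc (0:ℝ) 1) G)
    (a a' b' b : ℝ) (ha : 0 ≤ a) (h1 : a ≤ a') (h2 : a' ≤ b') (h3 : b' ≤ b) (hb : b ≤ 1) :
    jensenBregman G a' b' ≤ jensenBregman G a b := by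
  have mem : ∀ {x : ℝ}, a ≤ x → x ≤ b → x ∈ Icc (0:ℝ) 1 := fun hax hxb =>
    ⟨ha.trans hax, hxb.trans hb⟩
  -- Step 1: shrink left endpoint: JB(a',b') ≤ JB(a,b')
  have step1 : jensenBregman G a' b' ≤ jensenBregman G a b' := by
    rcases eq_or_lt_of_le h1 with rfl | h1'
    · exact le_rfl
    · have hm : a < (a + b') / 2 := by linarith
      have hm' : (a + b') / 2 < (a' + b') / 2 := by linarith
      have key := slope_le_slope hGconv (mem le_rfl (by linarith)) (mem h1 (by linarith))
        (mem (by linarith) (by linarith)) (mem (by linarith) (by linarith))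
        h1' hm' (by linarith) (by linarith)
      have hd : (a' + b') / 2 - (a + b') / 2 = (a' - a) / 2 := by ring
      rw [hd, div_le_div_iff₀ (by linarith) (by linarith)] at key
      unfold jensenBregman
      nlinarith
  -- Step 2: shrink right endpoint: JB(a,b') ≤ JB(a,b)
  have step2 : jensenBregman G a b' ≤ jensenBregman G a b := by
    rcases eq_or_lt_of_le h3 with rfl | h3'
    · exact le_rfl
    · have hm' : (a + b') / 2 < (a + b) / 2 := by linarith
      have key := slope_le_slope hGconv (mem (by linarith) (by linarith))
        (mem (by linarith) (by linarith)) (mem (h1.trans h2) h3) (mem (by linarith) le_rfl)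
        hm' h3' (by linarith) (by linarith)
      have hd : (a + b) / 2 - (a + b') / 2 = (b - b') / 2 := by ring
      rw [hd, div_le_div_iff₀ (by linarith) (by linarith)] at key
      unfold jensenBregman
      nlinarith
  exact step1.trans step2
end

section
/- Let G be a differentiable convex function on [0,1], 0 ≤ a ≤ b ≤ 1, and X a random variable supported on [a,b]. Then E[D_G(X ∥ E[X])] = E[G(X)] − G(E[X]) ≤ 2·JB_G(a,b). -/
open MeasureTheory Set

/-- The Bregman divergence `D_G(y ∥ x) = G(y) - G(x) - (y - x) G'(x)`. -/
noncomputable def bregman (G : ℝ → ℝ) (y x : ℝ) : ℝ := G y - G x - (y - x) * deriv G x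

/-!
The linear part of `D_G(X ∥ E[X])` has mean zero, which gives the identity. For the bound, let
`L` be the chord of `G` over `[a, b]` and `c = E[X]`. Convexity gives `G ≤ L` on `[a, b]`, hence
`E[G(X)] ≤ L(c)` and `G(a + b - c) ≤ L(a + b - c)`; since `L(c) + L(a + b - c) = G(a) + G(b)` and
`2 G((a + b)/2) ≤ G(c) + G(a + b - c)`, we get `E[G(X)] - G(c) ≤ 2 JB_G(a, b)`.
-/

section

variable {𝕜 : Type*} [Field 𝕜] [LinearOrder 𝕜] [IsStrictOrderedRing 𝕜] {s : Set 𝕜} {f : 𝕜 → 𝕜}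

theorem ConvexOn.le_add_slope_mul_sub (hf : ConvexOn 𝕜 s f) {a b t : 𝕜} (ha : a ∈ s) (hb : b ∈ s)
    (ht : t ∈ Icc a b) : f t ≤ f a + slope f a b * (t - a) := by
  obtain rfl | hat := ht.1.eq_or_lt
  · simp
  have hts : t ∈ s := hf.1.ordConnected.out ha hb ht
  rw [slope_def_field, ← sub_le_iff_le_add', ← div_le_iff₀ (sub_pos.2 hat)]
  exact hf.secant_mono ha hts hb hat.ne' (hat.trans_le ht.2).ne' ht.2

end

section

variable {Ω : Type*} {m0 : MeasurableSpace Ω} {μ : Measure Ω} [IsProbabilityMeasure μ]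
  {G : ℝ → ℝ} {X : Ω → ℝ}

theorem integral_bregman (hXint : Integrable X μ) (hGXint : Integrable (fun ω => G (X ω)) μ)
    (x : ℝ) :
    ∫ ω, bregman G (X ω) x ∂μ = ∫ ω, G (X ω) ∂μ - G x - (∫ ω, X ω ∂μ - x) * deriv G x := by
  have hGX_sub : Integrable (fun ω => G (X ω) - G x) μ := hGXint.sub (integrable_const _)
  have hX_sub : Integrable (fun ω => (X ω - x) * deriv G x) μ :=
    (hXint.sub (integrable_const x)).mul_const _
  simp only [bregman]
  rw [integral_sub hGX_sub hX_sub, integral_sub hGXint (integrable_const _), integral_mul_const,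
    integral_sub hXint (integrable_const _)]
  simp

theorem ConvexOn.integral_comp_le_add_slope_mul_sub {s : Set ℝ} (hG : ConvexOn ℝ s G) {a b : ℝ}
    (ha : a ∈ s) (hb : b ∈ s) (hX : ∀ᵐ ω ∂μ, X ω ∈ Icc a b) (hXint : Integrable X μ)
    (hGXint : Integrable (fun ω => G (X ω)) μ) :
    ∫ ω, G (X ω) ∂μ ≤ G a + slope G a b * (∫ ω, X ω ∂μ - a) := by
  have hX_sub : Integrable (fun ω => slope G a b * (X ω - a)) μ :=
    (hXint.sub (integrable_const a)).const_mul _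
  have hchord : Integrable (fun ω => G a + slope G a b * (X ω - a)) μ :=
    (integrable_const _).add hX_sub
  calc ∫ ω, G (X ω) ∂μ ≤ ∫ ω, G a + slope G a b * (X ω - a) ∂μ :=
        integral_mono_ae hGXint hchord (hX.mono fun ω hω => hG.le_add_slope_mul_sub ha hb hω)
    _ = G a + slope G a b * (∫ ω, X ω ∂μ - a) := by
        rw [integral_add (integrable_const _) hX_sub, integral_const_mul,
          integral_sub hXint (integrable_const _)]
        simp

theorem ConvexOn.integral_comp_sub_comp_integral_le_two_jensenBregman {a b : ℝ}
    (hG : ConvexOn ℝ (Icc a b) G) (hX : ∀ᵐ ω ∂μ, X ω ∈ Icc a b) (hXint : Integrable X μ)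
    (hGXint : Integrable (fun ω => G (X ω)) μ) :
    ∫ ω, G (X ω) ∂μ - G (∫ ω, X ω ∂μ) ≤ 2 * jensenBregman G a b := by
  set c := ∫ ω, X ω ∂μ
  have hc : c ∈ Icc a b := (convex_Icc a b).integral_mem isClosed_Icc hX hXint
  have hab : a ≤ b := hc.1.trans hc.2
  have ha : a ∈ Icc a b := left_mem_Icc.2 hab
  have hb : b ∈ Icc a b := right_mem_Icc.2 hab
  have hc' : a + b - c ∈ Icc a b := ⟨by linarith [hc.2], by linarith [hc.1]⟩
  have hmean := hG.integral_comp_le_add_slope_mul_sub ha hb hX hXint hGXint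
  have hreflect := hG.le_add_slope_mul_sub ha hb hc'
  have hmid : G ((a + b) / 2) ≤ (G c + G (a + b - c)) / 2 := by
    have key := hG.2 hc hc' (by norm_num : (0 : ℝ) ≤ 1 / 2) (by norm_num : (0 : ℝ) ≤ 1 / 2)
      (add_halves 1)
    rw [smul_eq_mul, smul_eq_mul, smul_eq_mul, smul_eq_mul,
      show (1 / 2 : ℝ) * c + 1 / 2 * (a + b - c) = (a + b) / 2 by ring] at key
    linarith
  -- true also for `a = b`, where `slope G a a = 0`
  have hslope : slope G a b * (b - a) = G b - G a := by
    simpa [mul_comm] using sub_smul_slope G a b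
  rw [jensenBregman]
  linarith

end

theorem bregman_to_mean_le_two_jensen_bregman_general
    {Ω : Type*} {m0 : MeasurableSpace Ω} (μ : Measure Ω) [IsProbabilityMeasure μ]
    (G : ℝ → ℝ)
    (hGconv : ConvexOn ℝ (Icc (0:ℝ) 1) G)
    (a b : ℝ) (ha : 0 ≤ a) (hb : b ≤ 1)
    (X : Ω → ℝ) (hXrange : ∀ ω, X ω ∈ Icc a b)
    (hXint : Integrable X μ) (hGXint : Integrable (fun ω => G (X ω)) μ) :
    ∫ ω, bregman G (X ω) (∫ ω', X ω' ∂μ) ∂μ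
        = (∫ ω, G (X ω) ∂μ) - G (∫ ω', X ω' ∂μ) ∧
      (∫ ω, G (X ω) ∂μ) - G (∫ ω', X ω' ∂μ) ≤ 2 * jensenBregman G a b := by
  have hG : ConvexOn ℝ (Icc a b) G := hGconv.subset (Icc_subset_Icc ha hb) (convex_Icc a b)
  exact ⟨by simp [integral_bregman hXint hGXint],
    hG.integral_comp_sub_comp_integral_le_two_jensenBregman (ae_of_all _ hXrange) hXint hGXint⟩

/-- For a random variable `X` supported on `[a,b] ⊆ [0,1]`,
`E[D_G(X ∥ E[X])] = E[G(X)] - G(E[X]) ≤ 2 JB_G(a,b)`. -/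
theorem bregman_to_mean_le_two_jensen_bregman
    {Ω : Type*} {m0 : MeasurableSpace Ω} (μ : Measure Ω) [IsProbabilityMeasure μ]
    (G : ℝ → ℝ)
    (hGdiff : ∀ x ∈ Ioo (0:ℝ) 1, DifferentiableAt ℝ G x)
    (hGconv : ConvexOn ℝ (Icc (0:ℝ) 1) G)
    (a b : ℝ) (ha : 0 ≤ a) (hab : a ≤ b) (hb : b ≤ 1)
    (X : Ω → ℝ) (hXrange : ∀ ω, X ω ∈ Icc a b)
    (hXint : Integrable X μ) (hGXint : Integrable (fun ω => G (X ω)) μ) :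
    ∫ ω, bregman G (X ω) (∫ ω', X ω' ∂μ) ∂μ
        = (∫ ω, G (X ω) ∂μ) - G (∫ ω', X ω' ∂μ) ∧
      (∫ ω, G (X ω) ∂μ) - G (∫ ω', X ω' ∂μ) ≤ 2 * jensenBregman G a b :=
  bregman_to_mean_le_two_jensen_bregman_general (m0 := m0) μ G hGconv a b ha hb X hXrange hXint
    hGXint
end

section
/- Let μ_σ and μ_τ be [0,1]-valued random variables with E[(μ_σ − μ_τ)²] = ε, and let N ≥ 1 be an integer. Then there exist points 0 = x_0 < x_1 < ⋯ < x_{N−1} < x_N with each interval [x_{k−1}, x_k) of length at most 2/N, such that Pr[k(μ_σ) ≠ k(μ_τ)] ≤ √ε · N, where k(z) is the unique index k with x_{k−1} ≤ z < x_k. -/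
/-!
Let `f t` be the probability that `t` lies between `X` and `Z`, i.e. in `Ι X Z`. By Tonelli and
Cauchy–Schwarz, `∫ f = E|X - Z| ≤ √ε`. Inside each window of width `1/N` around `i/N` pick a
point `x i` where `f` is at most its average there, so `f (x i) ≤ N ∫_{window} f`; the windows
are disjoint, hence `∑ f (x i) ≤ N √ε`. If `X` and `Z` fall into different cells, some cut point
`x i` lies in `Ι X Z`, and a union bound over the cut points finishes the proof.
-/

open MeasureTheory Set
open scoped ENNReal Interval

lemma lintegral_ofReal_abs_le_sqrt_integral_sq {Ω : Type*} {m0 : MeasurableSpace Ω}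
    {μ : Measure Ω} [IsProbabilityMeasure μ] {g : Ω → ℝ} (hg : MemLp g 2 μ) :
    ∫⁻ ω, ENNReal.ofReal |g ω| ∂μ ≤ ENNReal.ofReal √(∫ ω, g ω ^ 2 ∂μ) := by
  have h := eLpNorm_le_eLpNorm_of_exponent_le (μ := μ) (f := g) (by norm_num : (1 : ℝ≥0∞) ≤ 2)
  rw [eLpNorm_one_eq_lintegral_enorm, hg.eLpNorm_eq_integral_rpow_norm two_ne_zero
    ENNReal.ofNat_ne_top] at h
  specialize h hg.1
  simpa [Real.enorm_eq_ofReal_abs, Real.sqrt_eq_rpow] using h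

section Tonelli

variable {Ω : Type*} {m0 : MeasurableSpace Ω} {X Z : Ω → ℝ}

lemma measurableSet_mem_uIoc (hX : Measurable X) (hZ : Measurable Z) :
    MeasurableSet {p : ℝ × Ω | p.1 ∈ Ι (X p.2) (Z p.2)} :=
  (measurableSet_lt ((hX.min hZ).comp measurable_snd) measurable_fst).inter
    (measurableSet_le measurable_fst ((hX.max hZ).comp measurable_snd))

lemma measurable_measure_mem_uIoc (μ : Measure Ω) [SFinite μ] (hX : Measurable X)
    (hZ : Measurable Z) : Measurable fun t : ℝ => μ {ω | t ∈ Ι (X ω) (Z ω)} :=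
  measurable_measure_prodMk_left (measurableSet_mem_uIoc hX hZ)

lemma lintegral_measure_mem_uIoc (μ : Measure Ω) [SFinite μ] (hX : Measurable X)
    (hZ : Measurable Z) :
    ∫⁻ t, μ {ω | t ∈ Ι (X ω) (Z ω)} = ∫⁻ ω, ENNReal.ofReal |X ω - Z ω| ∂μ := by
  have hS := measurableSet_mem_uIoc hX hZ
  calc ∫⁻ t, μ {ω | t ∈ Ι (X ω) (Z ω)} = (volume.prod μ) _ := (Measure.prod_apply hS).symm
    _ = ∫⁻ ω, volume (Ι (X ω) (Z ω)) ∂μ := Measure.prod_apply_symm hS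
    _ = ∫⁻ ω, ENNReal.ofReal |X ω - Z ω| ∂μ := by simp_rw [Real.volume_uIoc, abs_sub_comm]

lemma lintegral_measure_mem_uIoc_le_sqrt (μ : Measure Ω) [IsProbabilityMeasure μ]
    (hX : Measurable X) (hZ : Measurable Z) (hXZ : MemLp (fun ω => X ω - Z ω) 2 μ) :
    ∫⁻ t, μ {ω | t ∈ Ι (X ω) (Z ω)} ≤ ENNReal.ofReal √(∫ ω, (X ω - Z ω) ^ 2 ∂μ) :=
  (lintegral_measure_mem_uIoc μ hX hZ).trans_le (lintegral_ofReal_abs_le_sqrt_integral_sq hXZ)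

end Tonelli

noncomputable def gridEdge (N i : ℕ) : ℝ := (i : ℝ) / N - 1 / (2 * N)

def gridCell (N i : ℕ) : Set ℝ := Ioc (gridEdge N i) (gridEdge N (i + 1))

section Grid

variable {N i : ℕ}

lemma gridEdge_succ (N i : ℕ) : gridEdge N (i + 1) = (i : ℝ) / N + 1 / (2 * N) := by
  simp only [gridEdge]
  push_cast
  ring

lemma gridEdge_add_two_sub (N i : ℕ) : gridEdge N (i + 2) - gridEdge N i = 2 / N := by
  simp only [gridEdge]
  push_cast
  ring

lemma gridCell_eq (N i : ℕ) :
    gridCell N i = Ioc ((i : ℝ) / N - 1 / (2 * N)) ((i : ℝ) / N + 1 / (2 * N)) := by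
  rw [gridCell, gridEdge_succ]
  rfl

lemma monotone_gridEdge (N : ℕ) : Monotone (gridEdge N) := fun i j hij => by
  simp only [gridEdge]
  gcongr

open Function in
lemma pairwise_disjoint_gridCell (N : ℕ) : Pairwise (Disjoint on (gridCell N)) :=
  (monotone_gridEdge N).pairwise_disjoint_on_Ioc_succ

lemma volume_gridCell (hN : 0 < N) (i : ℕ) : volume (gridCell N i) = (N : ℝ≥0∞)⁻¹ := by
  have hN' : (0 : ℝ) < N := by exact_mod_cast hN
  rw [gridCell, Real.volume_Ioc, gridEdge_succ, gridEdge, ← ENNReal.ofReal_natCast,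
    ← ENNReal.ofReal_inv_of_pos hN']
  congr 1
  field_simp
  ring

lemma setLAverage_gridCell (hN : 0 < N) (i : ℕ) (f : ℝ → ℝ≥0∞) :
    ⨍⁻ u in gridCell N i, f u ∂volume = N * ∫⁻ u in gridCell N i, f u := by
  rw [setLAverage_eq, volume_gridCell hN, ENNReal.div_eq_inv_mul, inv_inv]

lemma exists_mem_gridCell_le_mul_setLIntegral (hN : 0 < N) {f : ℝ → ℝ≥0∞} (hf : AEMeasurable f)
    (i : ℕ) : ∃ s ∈ gridCell N i, f s ≤ N * ∫⁻ u in gridCell N i, f u := by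
  rw [← setLAverage_gridCell hN]
  exact exists_le_setLAverage (by simp [volume_gridCell hN])
    (by simp [volume_gridCell hN, hN.ne']) hf.restrict

lemma sum_setLIntegral_gridCell_le (N : ℕ) (s : Finset ℕ) (f : ℝ → ℝ≥0∞) :
    ∑ j ∈ s, ∫⁻ u in gridCell N j, f u ≤ ∫⁻ u, f u := by
  rw [← lintegral_biUnion_finset ((pairwise_disjoint_gridCell N).set_pairwise _)
    fun _ _ => measurableSet_Ioc]
  exact setLIntegral_le_lintegral _ _

lemma sum_le_mul_lintegral_of_le_mul_setLIntegral_gridCell {f : ℝ → ℝ≥0∞} {t : ℕ → ℝ}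
    (h : ∀ i, f (t i) ≤ N * ∫⁻ u in gridCell N i, f u) (s : Finset ℕ) :
    ∑ j ∈ s, f (t j) ≤ N * ∫⁻ u, f u := by
  grw [Finset.sum_le_sum fun j _ => h j, ← Finset.mul_sum, sum_setLIntegral_gridCell_le]

variable {a b : ℝ}

lemma lt_of_mem_gridCell_of_mem_gridCell_succ (ha : a ∈ gridCell N i)
    (hb : b ∈ gridCell N (i + 1)) : a < b :=
  ha.2.trans_lt hb.1

lemma sub_le_of_mem_gridCell_of_mem_gridCell_succ (ha : a ∈ gridCell N i)
    (hb : b ∈ gridCell N (i + 1)) : b - a ≤ 2 / N := by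
  have := gridEdge_add_two_sub N i
  linarith [ha.1, hb.2]

end Grid

noncomputable def partitionPoints (N : ℕ) (t : ℕ → ℝ) (i : ℕ) : ℝ :=
  if i = 0 then 0 else if i < N then t i else 1 + 1 / (2 * N)

section PartitionPoints

variable {N i : ℕ} {t : ℕ → ℝ}

lemma partitionPoints_zero : partitionPoints N t 0 = 0 := rfl

lemma partitionPoints_of_lt (hi : i ≠ 0) (hiN : i < N) : partitionPoints N t i = t i := by
  simp [partitionPoints, hi, hiN]

lemma partitionPoints_self (hN : N ≠ 0) : partitionPoints N t N = 1 + 1 / (2 * N) := by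
  simp [partitionPoints, hN]

lemma one_lt_partitionPoints_self (hN : 0 < N) : 1 < partitionPoints N t N := by
  have hN' : (0 : ℝ) < N := by exact_mod_cast hN
  rw [partitionPoints_self hN.ne']
  exact lt_add_of_pos_right 1 (by positivity)

lemma partitionPoints_mem_gridCell (hN : 0 < N) (ht : ∀ i, t i ∈ gridCell N i) (hi : i ≤ N) :
    partitionPoints N t i ∈ gridCell N i := by
  have hN' : (0 : ℝ) < N := by exact_mod_cast hN
  rw [gridCell_eq]
  rcases Nat.eq_zero_or_pos i with rfl | hi0
  · rw [partitionPoints_zero]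
    simp only [Nat.cast_zero, zero_div, zero_sub, zero_add, mem_Ioc, Left.neg_neg_iff]
    constructor <;> positivity
  rcases hi.lt_or_eq with hiN | hiN
  · rw [partitionPoints_of_lt hi0.ne' hiN, ← gridCell_eq]
    exact ht i
  · rw [hiN, partitionPoints_self hN.ne', div_self hN'.ne']
    constructor <;> linarith [show 0 < 1 / (2 * (N : ℝ)) by positivity]

end PartitionPoints

section Cells

variable {x : ℕ → ℝ} {N : ℕ} {u v : ℝ}

lemma exists_mem_Ioc_of_not_mem_same_Ico (huv : u ≤ v) (hu : x 0 ≤ u) (hv : v < x N)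
    (h : ¬ ∃ k < N, u ∈ Ico (x k) (x (k + 1)) ∧ v ∈ Ico (x k) (x (k + 1))) :
    ∃ j ∈ Finset.Icc 1 (N - 1), x j ∈ Ioc u v := by
  classical
  have hex : ∃ n, u < x n := ⟨N, huv.trans_lt hv⟩
  set j := Nat.find hex
  have hj : u < x j := Nat.find_spec hex
  have hjN : j ≤ N := Nat.find_min' hex (huv.trans_lt hv)
  have hj0 : j ≠ 0 := fun h0 => (h0 ▸ hj).not_ge hu
  have hprev : x (j - 1) ≤ u := not_lt.1 (Nat.find_min hex (by omega))
  have hjv : x j ≤ v := by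
    by_contra! hvj
    refine h ⟨j - 1, by omega, ?_⟩
    rw [Nat.sub_add_cancel (Nat.pos_of_ne_zero hj0)]
    exact ⟨⟨hprev, hj⟩, ⟨hprev.trans huv, hvj⟩⟩
  have hjN' : j ≠ N := fun hjN => (hjN ▸ hjv).not_gt hv
  exact ⟨j, Finset.mem_Icc.2 ⟨by omega, by omega⟩, hj, hjv⟩

lemma exists_mem_uIoc_of_not_mem_same_Ico (hu : u ∈ Ico (x 0) (x N)) (hv : v ∈ Ico (x 0) (x N))
    (h : ¬ ∃ k < N, u ∈ Ico (x k) (x (k + 1)) ∧ v ∈ Ico (x k) (x (k + 1))) :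
    ∃ j ∈ Finset.Icc 1 (N - 1), x j ∈ Ι u v := by
  rcases le_total u v with huv | hvu
  · rw [uIoc_of_le huv]
    exact exists_mem_Ioc_of_not_mem_same_Ico huv hu.1 hv.2 h
  · rw [uIoc_of_ge hvu]
    simp_rw [and_comm (a := u ∈ _)] at h
    exact exists_mem_Ioc_of_not_mem_same_Ico hvu hv.1 hu.2 h

lemma measure_not_mem_same_Ico_le_sum {Ω : Type*} {m0 : MeasurableSpace Ω} (μ : Measure Ω)
    {X Z : Ω → ℝ} (hX : ∀ ω, X ω ∈ Ico (x 0) (x N)) (hZ : ∀ ω, Z ω ∈ Ico (x 0) (x N)) :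
    μ {ω | ¬ ∃ k < N, X ω ∈ Ico (x k) (x (k + 1)) ∧ Z ω ∈ Ico (x k) (x (k + 1))}
      ≤ ∑ j ∈ Finset.Icc 1 (N - 1), μ {ω | x j ∈ Ι (X ω) (Z ω)} := by
  refine (measure_mono fun ω hω => ?_).trans (measure_biUnion_finset_le _ _)
  obtain ⟨j, hj, hxj⟩ := exists_mem_uIoc_of_not_mem_same_Ico (hX ω) (hZ ω) hω
  exact mem_iUnion₂.2 ⟨j, hj, hxj⟩

end Cells

/-- Claim: given `[0,1]`-valued random variables `X`, `Z` with `E[(X - Z)²] = ε` and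
`N ≥ 1`, there is a partition `0 = x₀ < x₁ < ⋯ < x_N` of `[0,1]` (with `x_N > 1`),
each `xᵢ` (for `1 ≤ i ≤ N-1`) within `1/(2N)` of `i/N`, each interval of length at
most `2/N`, such that the probability that `X` and `Z` do not fall in a common
interval `[x_k, x_{k+1})` is at most `√ε · N`. -/
theorem partition_same_interval
    {Ω : Type*} {m0 : MeasurableSpace Ω} (μ : Measure Ω) [IsProbabilityMeasure μ]
    (X Z : Ω → ℝ) (hX : Measurable X) (hZ : Measurable Z)
    (hXr : ∀ ω, X ω ∈ Icc (0:ℝ) 1) (hZr : ∀ ω, Z ω ∈ Icc (0:ℝ) 1)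
    (ε : ℝ) (hε : ε = ∫ ω, (X ω - Z ω) ^ 2 ∂μ)
    (N : ℕ) (hN : 1 ≤ N) :
    ∃ x : ℕ → ℝ, x 0 = 0 ∧ 1 < x N ∧
      (∀ i < N, x i < x (i + 1)) ∧
      (∀ i, 1 ≤ i → i ≤ N - 1 → x i ∈ Icc ((i : ℝ)/N - 1/(2*N)) ((i : ℝ)/N + 1/(2*N))) ∧
      (∀ i < N, x (i + 1) - x i ≤ 2 / N) ∧
      (μ {ω | ¬ ∃ k < N, X ω ∈ Ico (x k) (x (k + 1)) ∧ Z ω ∈ Ico (x k) (x (k + 1))}).toReal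
        ≤ Real.sqrt ε * N := by
  have hN0 : 0 < N := hN
  set f : ℝ → ℝ≥0∞ := fun t => μ {ω | t ∈ Ι (X ω) (Z ω)}
  have hXZ : MemLp (fun ω => X ω - Z ω) 2 μ :=
    MemLp.of_bound (hX.sub hZ).aestronglyMeasurable 1 (ae_of_all _ fun ω =>
      abs_sub_le_of_nonneg_of_le (hXr ω).1 (hXr ω).2 (hZr ω).1 (hZr ω).2)
  choose t ht hft using
    exists_mem_gridCell_le_mul_setLIntegral hN0 (measurable_measure_mem_uIoc μ hX hZ).aemeasurable
  have hx : ∀ i ≤ N, partitionPoints N t i ∈ gridCell N i :=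
    fun _ => partitionPoints_mem_gridCell hN0 ht
  have hrange : ∀ {a}, a ∈ Icc (0 : ℝ) 1 →
      a ∈ Ico (partitionPoints N t 0) (partitionPoints N t N) :=
    fun ha => ⟨ha.1, ha.2.trans_lt (one_lt_partitionPoints_self hN0)⟩
  refine ⟨partitionPoints N t, partitionPoints_zero, one_lt_partitionPoints_self hN0,
    fun i hi => lt_of_mem_gridCell_of_mem_gridCell_succ (hx i hi.le) (hx (i + 1) hi),
    fun i _ hi => Ioc_subset_Icc_self (gridCell_eq N i ▸ hx i (by omega)),
    fun i hi => sub_le_of_mem_gridCell_of_mem_gridCell_succ (hx i hi.le) (hx (i + 1) hi),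
    ENNReal.toReal_le_of_le_ofReal (by positivity) ?_⟩
  calc _ ≤ ∑ j ∈ Finset.Icc 1 (N - 1), f (partitionPoints N t j) :=
        measure_not_mem_same_Ico_le_sum μ (fun ω => hrange (hXr ω)) (fun ω => hrange (hZr ω))
    _ = ∑ j ∈ Finset.Icc 1 (N - 1), f (t j) := Finset.sum_congr rfl fun j hj => by
        obtain ⟨hj1, hjN⟩ := Finset.mem_Icc.1 hj
        rw [partitionPoints_of_lt (by omega) (by omega)]
    _ ≤ N * ∫⁻ u, f u := sum_le_mul_lintegral_of_le_mul_setLIntegral_gridCell hft _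
    _ ≤ N * ENNReal.ofReal √ε := by
        grw [hε, lintegral_measure_mem_uIoc_le_sqrt μ hX hZ hXZ]
    _ = ENNReal.ofReal (√ε * N) := by
        rw [ENNReal.ofReal_mul (Real.sqrt_nonneg _), ENNReal.ofReal_natCast, mul_comm]
end

section
/- Suppose E[(μ_{στ} − μ_{σT_t})²] ≤ δ and E[(μ_{στ} − μ_{S_tτ})²] ≤ δ at time t of a communication protocol, where S_t × T_t is the transcript rectangle. Then for all t' > t, E[(μ_{σT_{t'}} − μ_{S_{t'}τ})²] ≤ 4δ, i.e., Alice and Bob δ-agree at all subsequent times. -/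
open Finset Set

variable {Ω S T : Type*}

/-- Conditional expectation of `f` given the event `A`, for a finite outcome space
with weights `p`. -/
noncomputable def cexp [Fintype Ω] (p : Ω → ℝ) (f : Ω → ℝ) (A : Set Ω) : ℝ :=
  (∑ ω, A.indicator (fun ω' => p ω' * f ω') ω) / (∑ ω, A.indicator p ω)

/-- Expectation of `f` with respect to the weights `p`. -/
noncomputable def pexp [Fintype Ω] (p : Ω → ℝ) (f : Ω → ℝ) : ℝ := ∑ ω, p ω * f ω

/-- `μ_{στ}(ω) = E[Y | σ, τ]`. -/
noncomputable def postBoth [Fintype Ω] (p : Ω → ℝ) (σ : Ω → S) (τ : Ω → T) (Y : Ω → ℝ)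
    (ω : Ω) : ℝ :=
  cexp p Y {ω' | σ ω' = σ ω ∧ τ ω' = τ ω}

/-- `μ_σ(ω) = E[Y | σ]`. -/
noncomputable def postSig [Fintype Ω] (p : Ω → ℝ) (σ : Ω → S) (Y : Ω → ℝ) (ω : Ω) : ℝ :=
  cexp p Y {ω' | σ ω' = σ ω}

/-- `μ_{S'τ}(ω) = E[Y | σ ∈ S', τ]`. -/
noncomputable def postSetSig [Fintype Ω] (p : Ω → ℝ) (σ : Ω → S) (τ : Ω → T) (Y : Ω → ℝ)
    (S' : Set S) (ω : Ω) : ℝ :=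
  cexp p Y {ω' | σ ω' ∈ S' ∧ τ ω' = τ ω}

/-- `μ_{σT'}(ω) = E[Y | σ, τ ∈ T']`. -/
noncomputable def postSigSet [Fintype Ω] (p : Ω → ℝ) (σ : Ω → S) (τ : Ω → T) (Y : Ω → ℝ)
    (T' : Set T) (ω : Ω) : ℝ :=
  cexp p Y {ω' | σ ω' = σ ω ∧ τ ω' ∈ T'}

/-- `μ_{S'T'} = E[Y | σ ∈ S', τ ∈ T']`. -/
noncomputable def postRect [Fintype Ω] (p : Ω → ℝ) (σ : Ω → S) (τ : Ω → T) (Y : Ω → ℝ)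
    (S' : Set S) (T' : Set T) : ℝ :=
  cexp p Y {ω' | σ ω' ∈ S' ∧ τ ω' ∈ T'}

/-- The rectangle substitutes condition (with squared-error loss):
for all `S' ⊆ S`, `T' ⊆ T`,
`E[(μ_{στ} - μ_{S'τ})² | σ ∈ S', τ ∈ T'] ≤ E[(μ_{σT'} - μ_{S'T'})² | σ ∈ S', τ ∈ T']`. -/
noncomputable def RectangleSubstitutes [Fintype Ω] (p : Ω → ℝ) (σ : Ω → S) (τ : Ω → T)
    (Y : Ω → ℝ) : Prop :=
  ∀ (S' : Set S) (T' : Set T),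
    cexp p (fun ω => (postBoth p σ τ Y ω - postSetSig p σ τ Y S' ω) ^ 2)
        {ω | σ ω ∈ S' ∧ τ ω ∈ T'} ≤
      cexp p (fun ω => (postSigSet p σ τ Y T' ω - postRect p σ τ Y S' T') ^ 2)
        {ω | σ ω ∈ S' ∧ τ ω ∈ T'}

/-!
Every posterior here is a conditional expectation `E[Y | k]` of `Y` given a coarsening `k` of
`(σ, τ)`: because the transcript cells are rectangles, conditioning on `σ` and `τ ∈ T_t` is
conditioning on `(σ, T_t)`. For `(σ, τ)` finer than `k'` finer than `k`, the Pythagorean identity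
`E[(f - h)²] = E[(f - E[f | k])²] + E[(E[f | k] - h)²]` (for `h` a function of `k`) shows that
`E[(μ_{στ} - E[Y | k'])²] ≤ E[(μ_{στ} - E[Y | k])²]`. So Alice's and Bob's errors at time `t'` are
still at most `δ`, and `(a - b)² ≤ 2(c - a)² + 2(c - b)²` with `c = μ_{στ}` gives `4δ`.
-/

open Function

section CondMean

variable {κ κ' κ'' : Type*} [Fintype Ω]

noncomputable def condMean (p f : Ω → ℝ) (k : Ω → κ) (ω : Ω) : ℝ :=
  cexp p f {ω' | k ω' = k ω}

theorem condMean_factorsThrough (p f : Ω → ℝ) (k : Ω → κ) : (condMean p f k).FactorsThrough k :=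
  fun _ _ h => by simp only [condMean, h]

theorem sum_fiber_mul_condMean [DecidableEq κ] {p : Ω → ℝ} (hp : ∀ ω, 0 ≤ p ω) (f : Ω → ℝ)
    (k : Ω → κ) (ω : Ω) :
    (∑ ω' with k ω' = k ω, p ω') * condMean p f k ω = ∑ ω' with k ω' = k ω, p ω' * f ω' := by
  have hdef : condMean p f k ω =
      (∑ ω' with k ω' = k ω, p ω' * f ω') / ∑ ω' with k ω' = k ω, p ω' := by
    simp only [condMean, cexp, sum_filter, Set.indicator_apply, Set.mem_ofPred_eq]
  rw [hdef]
  by_cases hD : ∑ ω' with k ω' = k ω, p ω' = 0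
  · have hzero : ∀ ω' ∈ univ.filter (k · = k ω), p ω' = 0 :=
      (sum_eq_zero_iff_of_nonneg fun ω' _ => hp ω').mp hD
    rw [hD, zero_mul, sum_eq_zero fun ω' h => by rw [hzero ω' h, zero_mul]]
  · exact mul_div_cancel₀ _ hD

theorem pexp_condMean_mul {p : Ω → ℝ} (hp : ∀ ω, 0 ≤ p ω) (f : Ω → ℝ) {k : Ω → κ}
    {h : Ω → ℝ} (hh : h.FactorsThrough k) :
    pexp p (fun ω => condMean p f k ω * h ω) = pexp p (fun ω => f ω * h ω) := by
  classical
  have hmaps : ∀ ω ∈ (univ : Finset Ω), k ω ∈ (univ : Finset Ω).image k :=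
    fun ω _ => mem_image_of_mem k (mem_univ ω)
  simp only [pexp]
  rw [← sum_fiberwise_of_maps_to hmaps, ← sum_fiberwise_of_maps_to hmaps]
  refine sum_congr rfl fun j hj => ?_
  obtain ⟨ω, -, rfl⟩ := mem_image.mp hj
  calc ∑ ω' with k ω' = k ω, p ω' * (condMean p f k ω' * h ω')
      = (∑ ω' with k ω' = k ω, p ω') * condMean p f k ω * h ω := by
        rw [sum_mul, sum_mul]
        refine sum_congr rfl fun ω' hω' => ?_
        rw [condMean_factorsThrough p f k (mem_filter.mp hω').2, hh (mem_filter.mp hω').2]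
        ring
    _ = (∑ ω' with k ω' = k ω, p ω' * f ω') * h ω :=
        congrArg (· * h ω) (sum_fiber_mul_condMean hp f k ω)
    _ = ∑ ω' with k ω' = k ω, p ω' * (f ω' * h ω') := by
        rw [sum_mul]
        refine sum_congr rfl fun ω' hω' => ?_
        rw [hh (mem_filter.mp hω').2]
        ring

theorem pexp_sq_sub_eq_add {p : Ω → ℝ} (hp : ∀ ω, 0 ≤ p ω) (f : Ω → ℝ) {k : Ω → κ}
    {h : Ω → ℝ} (hh : h.FactorsThrough k) :
    pexp p (fun ω => (f ω - h ω) ^ 2) =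
      pexp p (fun ω => (f ω - condMean p f k ω) ^ 2) +
        pexp p (fun ω => (condMean p f k ω - h ω) ^ 2) := by
  set m := condMean p f k
  have hm : m.FactorsThrough k := condMean_factorsThrough p f k
  have hcross : pexp p (fun ω => f ω * (m ω - h ω)) = pexp p (fun ω => m ω * (m ω - h ω)) :=
    (pexp_condMean_mul hp f fun _ _ hab => by rw [hm hab, hh hab]).symm
  have hexpand : ∀ ω, p ω * (f ω - h ω) ^ 2 = p ω * (f ω - m ω) ^ 2 + p ω * (m ω - h ω) ^ 2 +
      2 * (p ω * (f ω * (m ω - h ω)) - p ω * (m ω * (m ω - h ω))) := fun ω => by ring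
  simp only [pexp] at hcross ⊢
  simp only [hexpand, sum_add_distrib, ← mul_sum, sum_sub_distrib, hcross, sub_self, mul_zero,
    add_zero]

theorem pexp_sq_condMean_sub_condMean_le {p : Ω → ℝ} (hp : ∀ ω, 0 ≤ p ω) (f : Ω → ℝ)
    {k : Ω → κ} {g' : Ω → κ'} {g : Ω → κ''} (hg' : g'.FactorsThrough k)
    (hg : g.FactorsThrough g') :
    pexp p (fun ω => (condMean p f k ω - condMean p f g' ω) ^ 2) ≤
      pexp p (fun ω => (condMean p f k ω - condMean p f g ω) ^ 2) := by
  have hfine := pexp_sq_sub_eq_add hp f (k := k)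
    fun _ _ hab => condMean_factorsThrough p f g' (hg' hab)
  have hcoarse := pexp_sq_sub_eq_add hp f (k := k)
    fun _ _ hab => condMean_factorsThrough p f g (hg (hg' hab))
  have hmiddle := pexp_sq_sub_eq_add hp f (k := g')
    fun _ _ hab => condMean_factorsThrough p f g (hg hab)
  have hnonneg : 0 ≤ pexp p (fun ω => (condMean p f g' ω - condMean p f g ω) ^ 2) :=
    sum_nonneg fun ω _ => mul_nonneg (hp ω) (sq_nonneg _)
  linarith

theorem pexp_sq_sub_le {p : Ω → ℝ} (hp : ∀ ω, 0 ≤ p ω) (a b c : Ω → ℝ) :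
    pexp p (fun ω => (a ω - b ω) ^ 2) ≤
      2 * pexp p (fun ω => (c ω - a ω) ^ 2) + 2 * pexp p (fun ω => (c ω - b ω) ^ 2) := by
  simp only [pexp, mul_sum, ← sum_add_distrib]
  gcongr with ω
  nlinarith [mul_nonneg (hp ω) (sq_nonneg (2 * c ω - a ω - b ω))]

end CondMean

theorem postBoth_eq_condMean [Fintype Ω] (p : Ω → ℝ) (σ : Ω → S) (τ : Ω → T) (Y : Ω → ℝ)
    (ω : Ω) : postBoth p σ τ Y ω = condMean p Y (fun ω => (σ ω, τ ω)) ω := by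
  simp only [postBoth, condMean, Prod.ext_iff]

def IsRectanglePartition (σ : Ω → S) (τ : Ω → T) (St : Ω → Set S) (Tt : Ω → Set T) : Prop :=
  (∀ ω, σ ω ∈ St ω ∧ τ ω ∈ Tt ω) ∧
    ∀ ω ω', σ ω' ∈ St ω → τ ω' ∈ Tt ω → St ω' = St ω ∧ Tt ω' = Tt ω

namespace IsRectanglePartition

variable {σ : Ω → S} {τ : Ω → T} {St : Ω → Set S} {Tt : Ω → Set T}

theorem eq_and_mem_iff (R : IsRectanglePartition σ τ St Tt) (ω ω' : Ω) :
    σ ω' = σ ω ∧ τ ω' ∈ Tt ω ↔ σ ω' = σ ω ∧ Tt ω' = Tt ω :=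
  and_congr_right fun hσ =>
    ⟨fun hτ => (R.2 ω ω' (hσ ▸ (R.1 ω).1) hτ).2, fun hT => hT ▸ (R.1 ω').2⟩

theorem mem_and_eq_iff (R : IsRectanglePartition σ τ St Tt) (ω ω' : Ω) :
    σ ω' ∈ St ω ∧ τ ω' = τ ω ↔ St ω' = St ω ∧ τ ω' = τ ω :=
  and_congr_left fun hτ =>
    ⟨fun hσ => (R.2 ω ω' hσ (hτ ▸ (R.1 ω).2)).1, fun hS => hS ▸ (R.1 ω').1⟩

theorem postSigSet_eq_condMean [Fintype Ω] (R : IsRectanglePartition σ τ St Tt) (p Y : Ω → ℝ)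
    (ω : Ω) : postSigSet p σ τ Y (Tt ω) ω = condMean p Y (fun ω => (σ ω, Tt ω)) ω := by
  simp only [postSigSet, condMean, Prod.ext_iff, R.eq_and_mem_iff ω]

theorem postSetSig_eq_condMean [Fintype Ω] (R : IsRectanglePartition σ τ St Tt) (p Y : Ω → ℝ)
    (ω : Ω) : postSetSig p σ τ Y (St ω) ω = condMean p Y (fun ω => (St ω, τ ω)) ω := by
  simp only [postSetSig, condMean, Prod.ext_iff, R.mem_and_eq_iff ω]

theorem factorsThrough_sig (R : IsRectanglePartition σ τ St Tt) :
    (fun ω => (σ ω, Tt ω)).FactorsThrough fun ω => (σ ω, τ ω) := by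
  intro a b hab
  simp only [Prod.mk.injEq] at hab ⊢
  obtain ⟨hσ, hτ⟩ := hab
  exact ⟨hσ, ((R.eq_and_mem_iff a b).mp ⟨hσ.symm, hτ ▸ (R.1 a).2⟩).2.symm⟩

theorem factorsThrough_set (R : IsRectanglePartition σ τ St Tt) :
    (fun ω => (St ω, τ ω)).FactorsThrough fun ω => (σ ω, τ ω) := by
  intro a b hab
  simp only [Prod.mk.injEq] at hab ⊢
  obtain ⟨hσ, hτ⟩ := hab
  exact ⟨((R.mem_and_eq_iff a b).mp ⟨hσ ▸ (R.1 a).1, hτ.symm⟩).1.symm, hτ⟩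

theorem factorsThrough_sig_of_subset (R : IsRectanglePartition σ τ St Tt) {Tt' : Ω → Set T}
    (hmem' : ∀ ω, τ ω ∈ Tt' ω) (hsub : ∀ ω, Tt' ω ⊆ Tt ω) :
    (fun ω => (σ ω, Tt ω)).FactorsThrough fun ω => (σ ω, Tt' ω) := by
  intro a b hab
  simp only [Prod.mk.injEq] at hab ⊢
  obtain ⟨hσ, hT'⟩ := hab
  exact ⟨hσ, ((R.eq_and_mem_iff a b).mp ⟨hσ.symm, hsub a (hT' ▸ hmem' b)⟩).2.symm⟩

theorem factorsThrough_set_of_subset (R : IsRectanglePartition σ τ St Tt) {St' : Ω → Set S}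
    (hmem' : ∀ ω, σ ω ∈ St' ω) (hsub : ∀ ω, St' ω ⊆ St ω) :
    (fun ω => (St ω, τ ω)).FactorsThrough fun ω => (St' ω, τ ω) := by
  intro a b hab
  simp only [Prod.mk.injEq] at hab ⊢
  obtain ⟨hS', hτ⟩ := hab
  exact ⟨((R.mem_and_eq_iff a b).mp ⟨hsub a (hS' ▸ hmem' b), hτ.symm⟩).1.symm, hτ⟩

end IsRectanglePartition

theorem continue_to_agree_general
    [Fintype Ω] (p : Ω → ℝ) (hp : ∀ ω, 0 ≤ p ω)
    (σ : Ω → S) (τ : Ω → T) (Y : Ω → ℝ)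
    -- the transcript rectangles at time `t`:
    (St : Ω → Set S) (Tt : Ω → Set T)
    (hmem : ∀ ω, σ ω ∈ St ω ∧ τ ω ∈ Tt ω)
    (hrect : ∀ ω ω', σ ω' ∈ St ω → τ ω' ∈ Tt ω → St ω' = St ω ∧ Tt ω' = Tt ω)
    -- the transcript rectangles at a later time `t'`, refining those at time `t`:
    (St' : Ω → Set S) (Tt' : Ω → Set T)
    (hmem' : ∀ ω, σ ω ∈ St' ω ∧ τ ω ∈ Tt' ω)
    (hrect' : ∀ ω ω', σ ω' ∈ St' ω → τ ω' ∈ Tt' ω → St' ω' = St' ω ∧ Tt' ω' = Tt' ω)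
    (hrefine : ∀ ω, St' ω ⊆ St ω ∧ Tt' ω ⊆ Tt ω)
    (δ : ℝ)
    (hA : pexp p (fun ω => (postBoth p σ τ Y ω - postSigSet p σ τ Y (Tt ω) ω) ^ 2) ≤ δ)
    (hB : pexp p (fun ω => (postBoth p σ τ Y ω - postSetSig p σ τ Y (St ω) ω) ^ 2) ≤ δ) :
    pexp p (fun ω => (postSigSet p σ τ Y (Tt' ω) ω - postSetSig p σ τ Y (St' ω) ω) ^ 2)
      ≤ 4 * δ := by
  have R : IsRectanglePartition σ τ St Tt := ⟨hmem, hrect⟩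
  have R' : IsRectanglePartition σ τ St' Tt' := ⟨hmem', hrect'⟩
  simp only [postBoth_eq_condMean, R.postSigSet_eq_condMean, R.postSetSig_eq_condMean] at hA hB
  simp only [R'.postSigSet_eq_condMean, R'.postSetSig_eq_condMean]
  have hAlice := pexp_sq_condMean_sub_condMean_le hp Y R'.factorsThrough_sig
    (R.factorsThrough_sig_of_subset (fun ω => (hmem' ω).2) fun ω => (hrefine ω).2)
  have hBob := pexp_sq_condMean_sub_condMean_le hp Y R'.factorsThrough_set
    (R.factorsThrough_set_of_subset (fun ω => (hmem' ω).1) fun ω => (hrefine ω).1)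
  linarith [pexp_sq_sub_le hp (condMean p Y fun ω => (σ ω, Tt' ω))
    (condMean p Y fun ω => (St' ω, τ ω)) (condMean p Y fun ω => (σ ω, τ ω))]

/-- Once Alice and Bob are close to the truth, they continue to agree: if at time `t`
(rectangles `St ω × Tt ω`) we have `E[(μ_{στ} - μ_{σT_t})²] ≤ δ` and
`E[(μ_{στ} - μ_{S_tτ})²] ≤ δ`, then at any later time `t'` (refined rectangles
`St' ω × Tt' ω`) we have `E[(μ_{σT_{t'}} - μ_{S_{t'}τ})²] ≤ 4δ`. -/
theorem continue_to_agree
    [Fintype Ω] (p : Ω → ℝ) (hp : ∀ ω, 0 ≤ p ω) (hp1 : ∑ ω, p ω = 1)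
    (σ : Ω → S) (τ : Ω → T) (Y : Ω → ℝ) (hY : ∀ ω, Y ω ∈ Icc (0:ℝ) 1)
    -- the transcript rectangles at time `t`:
    (St : Ω → Set S) (Tt : Ω → Set T)
    (hmem : ∀ ω, σ ω ∈ St ω ∧ τ ω ∈ Tt ω)
    (hrect : ∀ ω ω', σ ω' ∈ St ω → τ ω' ∈ Tt ω → St ω' = St ω ∧ Tt ω' = Tt ω)
    -- the transcript rectangles at a later time `t'`, refining those at time `t`:
    (St' : Ω → Set S) (Tt' : Ω → Set T)
    (hmem' : ∀ ω, σ ω ∈ St' ω ∧ τ ω ∈ Tt' ω)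
    (hrect' : ∀ ω ω', σ ω' ∈ St' ω → τ ω' ∈ Tt' ω → St' ω' = St' ω ∧ Tt' ω' = Tt' ω)
    (hrefine : ∀ ω, St' ω ⊆ St ω ∧ Tt' ω ⊆ Tt ω)
    (δ : ℝ)
    (hA : pexp p (fun ω => (postBoth p σ τ Y ω - postSigSet p σ τ Y (Tt ω) ω) ^ 2) ≤ δ)
    (hB : pexp p (fun ω => (postBoth p σ τ Y ω - postSetSig p σ τ Y (St ω) ω) ^ 2) ≤ δ) :
    pexp p (fun ω => (postSigSet p σ τ Y (Tt' ω) ω - postSetSig p σ τ Y (St' ω) ω) ^ 2)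
      ≤ 4 * δ :=
  continue_to_agree_general p hp σ τ Y St Tt hmem hrect St' Tt' hmem' hrect' hrefine δ hA hB
end

section
/- Consider the one-round protocol where Alice sends μ_σ rounded to the nearest multiple of ε and Bob replies with μ_{Sτ} rounded to the nearest multiple of ε. If the information structure satisfies rectangle substitutes, then at the end Bob is ε²-accurate: E[(μ_{στ} − μ_{Sτ})²] ≤ ε², where S is the set of Alice signals consistent with her message. -/
open Finset Set

variable {Ω S T : Type*}

/-- One-round rounding protocol: Alice sends `μ_σ` rounded to the nearest multiple
of `ε`, so the set of Alice signals consistent with her message is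
`Sε ω = {s | round(μ_s/ε) = round(μ_{σ(ω)}/ε)}`. Under rectangle substitutes, Bob is
then `ε²`-accurate: `E[(μ_{στ} - μ_{Sτ})²] ≤ ε²`. -/
theorem one_round_rounding_accurate
    [Fintype Ω] (p : Ω → ℝ) (hp : ∀ ω, 0 ≤ p ω) (hp1 : ∑ ω, p ω = 1)
    (σ : Ω → S) (τ : Ω → T) (Y : Ω → ℝ) (hY : ∀ ω, Y ω ∈ Icc (0:ℝ) 1)
    (hRS : RectangleSubstitutes p σ τ Y)
    (ε : ℝ) (hε : 0 < ε)
    (val : S → ℝ) (hval : ∀ s, val s = cexp p Y {ω' | σ ω' = s})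
    (Sε : Ω → Set S)
    (hSε : ∀ ω, Sε ω = {s | round (val s / ε) = round (val (σ ω) / ε)}) :
    pexp p (fun ω => (postBoth p σ τ Y ω - postSetSig p σ τ Y (Sε ω) ω) ^ 2) ≤ ε ^ 2 := by
  classical
  set m : Ω → ℤ := fun ω => round (val (σ ω) / ε) with hm
  set f : Ω → ℝ := fun ω => (postBoth p σ τ Y ω - postSetSig p σ τ Y (Sε ω) ω) ^ 2 with hf
  -- key per-class bound
  have key : ∀ k : ℤ, (∑ ω ∈ Finset.univ.filter (fun ω => m ω = k), p ω * f ω)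
      ≤ ε ^ 2 * ∑ ω ∈ Finset.univ.filter (fun ω => m ω = k), p ω := by
    intro k
    set A : Set Ω := {ω | m ω = k} with hA
    set S' : Set S := {s | round (val s / ε) = k} with hS'
    have hAfilter : ∀ (g : Ω → ℝ),
        ∑ ω ∈ Finset.univ.filter (fun ω => m ω = k), g ω
          = ∑ ω ∈ Finset.univ.filter (· ∈ A), g ω := by
      intro g
      apply Finset.sum_congr _ fun _ _ => rfl
      apply Finset.filter_congr
      intro ω _
      simp [hA]
    have hD0 : 0 ≤ ∑ ω ∈ Finset.univ.filter (· ∈ A), p ω :=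
      Finset.sum_nonneg fun ω _ => hp ω
    rcases eq_or_lt_of_le hD0 with h0 | h0
    · -- zero-mass class
      have hz : ∀ ω ∈ Finset.univ.filter (· ∈ A), p ω = 0 := fun ω hω =>
        (Finset.sum_eq_zero_iff_of_nonneg fun ω _ => hp ω).mp h0.symm ω hω
      rw [hAfilter, hAfilter]
      rw [Finset.sum_eq_zero fun ω hω => by rw [hz ω hω, zero_mul], ← h0, mul_zero]
    · -- positive-mass class
      -- identify the RS rectangle with A
      have hsetA : {ω | σ ω ∈ S' ∧ τ ω ∈ (Set.univ : Set T)} = A := by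
        ext ω; simp [hS', hA, hm]
      -- the function f agrees on A with the RS LHS integrand
      have hfS' : ∀ ω ∈ A, f ω
          = (postBoth p σ τ Y ω - postSetSig p σ τ Y S' ω) ^ 2 := by
        intro ω hω
        have : Sε ω = S' := by
          rw [hSε ω, hS']
          have : round (val (σ ω) / ε) = k := hω
          rw [this]
        rw [hf]; simp only; rw [this]
      -- the RS RHS integrand equals (val∘σ - c)^2 on A, with c = cexp p Y A
      have hRHS : ∀ ω ∈ A,
          (postSigSet p σ τ Y Set.univ ω - postRect p σ τ Y S' Set.univ) ^ 2
            = (val (σ ω) - cexp p Y A) ^ 2 := by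
        intro ω _
        have h1 : postSigSet p σ τ Y Set.univ ω = val (σ ω) := by
          rw [postSigSet, hval]
          congr 1
          ext ω'; simp
        have h2 : postRect p σ τ Y S' Set.univ = cexp p Y A := by
          rw [postRect, hsetA]
        rw [h1, h2]
      -- pointwise interval bounds
      have hIcc : ∀ s : S, round (val s / ε) = k →
          val s ∈ Icc (ε * k - ε / 2) (ε * k + ε / 2) := by
        intro s hs
        have h := abs_sub_round (val s / ε)
        rw [hs] at h
        rw [abs_le] at h
        have h1 : ((k : ℝ) - 1 / 2) * ε ≤ val s :=
          (le_div_iff₀ hε).mp (by linarith [h.1])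
        have h2 : val s ≤ ((k : ℝ) + 1 / 2) * ε :=
          (div_le_iff₀ hε).mp (by linarith [h.2])
        constructor
        · nlinarith
        · nlinarith
      -- tower: on A, expected Y equals expected val∘σ
      have tower : ∑ ω ∈ Finset.univ.filter (· ∈ A), p ω * Y ω
          = ∑ ω ∈ Finset.univ.filter (· ∈ A), p ω * val (σ ω) := by
        have maps : ∀ ω ∈ Finset.univ.filter (· ∈ A),
            σ ω ∈ (Finset.univ.filter (· ∈ A)).image σ := fun ω hω =>
          Finset.mem_image_of_mem σ hω
        rw [← Finset.sum_fiberwise_of_maps_to maps (fun ω => p ω * Y ω),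
            ← Finset.sum_fiberwise_of_maps_to maps (fun ω => p ω * val (σ ω))]
        apply Finset.sum_congr rfl
        intro s hs
        -- the fiber inside A equals the full σ-fiber
        have hfib : (Finset.univ.filter (· ∈ A)).filter (fun ω => σ ω = s)
            = Finset.univ.filter (fun ω => σ ω = s) := by
          rcases Finset.mem_image.mp hs with ⟨ω0, hω0, hσω0⟩
          have hk : round (val s / ε) = k := by
            have : m ω0 = k := by
              have := Finset.mem_filter.mp hω0
              exact this.2
            rw [← hσω0]; exact this
          ext ω
          simp only [Finset.mem_filter, Finset.mem_univ, true_and]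
          constructor
          · rintro ⟨_, h⟩; exact h
          · intro h
            refine ⟨?_, h⟩
            show m ω = k
            rw [hm]; simp only; rw [h]; exact hk
        rw [hfib]
        -- on each fiber, sum of p·Y = sum of p·(val s)
        have hvalsum : ∑ ω ∈ Finset.univ.filter (fun ω => σ ω = s), p ω * Y ω
            = val s * ∑ ω ∈ Finset.univ.filter (fun ω => σ ω = s), p ω := by
          have hDs : 0 ≤ ∑ ω ∈ Finset.univ.filter (fun ω => σ ω = s), p ω :=
            Finset.sum_nonneg fun ω _ => hp ω
          rcases eq_or_lt_of_le hDs with hDs0 | hDs0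
          · have hz : ∀ ω ∈ Finset.univ.filter (fun ω => σ ω = s), p ω = 0 := fun ω hω =>
              (Finset.sum_eq_zero_iff_of_nonneg fun ω _ => hp ω).mp hDs0.symm ω hω
            rw [Finset.sum_eq_zero fun ω hω => by rw [hz ω hω, zero_mul], ← hDs0, mul_zero]
          · have hv : val s = (∑ ω ∈ Finset.univ.filter (fun ω => σ ω = s), p ω * Y ω)
                / (∑ ω ∈ Finset.univ.filter (fun ω => σ ω = s), p ω) := by
              rw [hval s, cexp]
              congr 1
              · rw [Finset.sum_filter]
                exact Finset.sum_congr rfl fun ω _ => by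
                  by_cases h : σ ω = s <;> simp [Set.indicator_apply, h]
              · rw [Finset.sum_filter]
                exact Finset.sum_congr rfl fun ω _ => by
                  by_cases h : σ ω = s <;> simp [Set.indicator_apply, h]
            rw [hv, div_mul_cancel₀]
            exact ne_of_gt hDs0
        rw [hvalsum, Finset.mul_sum]
        exact Finset.sum_congr rfl fun ω hω => by
          rw [(Finset.mem_filter.mp hω).2, mul_comm]
      -- c := cexp p Y A lies in the interval
      have hcA : cexp p Y A ∈ Icc (ε * k - ε / 2) (ε * k + ε / 2) := by
        have hcexp : cexp p Y A = (∑ ω ∈ Finset.univ.filter (· ∈ A), p ω * Y ω)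
            / (∑ ω ∈ Finset.univ.filter (· ∈ A), p ω) := by
          rw [cexp]
          congr 1
          · rw [Finset.sum_filter]
            exact Finset.sum_congr rfl fun ω _ => by
              by_cases h : ω ∈ A <;> simp [Set.indicator_apply, h]
          · rw [Finset.sum_filter]
            exact Finset.sum_congr rfl fun ω _ => by
              by_cases h : ω ∈ A <;> simp [Set.indicator_apply, h]
        rw [hcexp, tower]
        have hb : ∀ ω ∈ Finset.univ.filter (· ∈ A),
            val (σ ω) ∈ Icc (ε * k - ε / 2) (ε * k + ε / 2) := by
          intro ω hω
          have hωA : ω ∈ A := (Finset.mem_filter.mp hω).2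
          exact hIcc (σ ω) hωA
        constructor
        · rw [le_div_iff₀ h0]
          calc (ε * ↑k - ε / 2) * ∑ ω ∈ Finset.univ.filter (· ∈ A), p ω
              = ∑ ω ∈ Finset.univ.filter (· ∈ A), p ω * (ε * ↑k - ε / 2) := by
                rw [Finset.mul_sum]; exact Finset.sum_congr rfl fun ω _ => mul_comm _ _
            _ ≤ ∑ ω ∈ Finset.univ.filter (· ∈ A), p ω * val (σ ω) :=
                Finset.sum_le_sum fun ω hω =>
                  mul_le_mul_of_nonneg_left (hb ω hω).1 (hp ω)
        · rw [div_le_iff₀ h0]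
          calc ∑ ω ∈ Finset.univ.filter (· ∈ A), p ω * val (σ ω)
              ≤ ∑ ω ∈ Finset.univ.filter (· ∈ A), p ω * (ε * ↑k + ε / 2) :=
                Finset.sum_le_sum fun ω hω =>
                  mul_le_mul_of_nonneg_left (hb ω hω).2 (hp ω)
            _ = (ε * ↑k + ε / 2) * ∑ ω ∈ Finset.univ.filter (· ∈ A), p ω := by
                rw [Finset.mul_sum]; exact Finset.sum_congr rfl fun ω _ => mul_comm _ _
      -- bound on RHS integrand on A
      have hptbound : ∀ ω ∈ A, (val (σ ω) - cexp p Y A) ^ 2 ≤ ε ^ 2 := by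
        intro ω hω
        have h1 := hIcc (σ ω) hω
        apply sq_le_sq'
        · nlinarith [h1.1, h1.2, hcA.1, hcA.2]
        · nlinarith [h1.1, h1.2, hcA.1, hcA.2]
      -- cexp of f over A ≤ ε²
      have hcexpf : cexp p f A ≤ ε ^ 2 := by
        have e1 : cexp p f A
            = cexp p (fun ω => (postBoth p σ τ Y ω - postSetSig p σ τ Y S' ω) ^ 2) A := by
          rw [cexp, cexp]
          congr 1
          apply Finset.sum_congr rfl
          intro ω _
          by_cases h : ω ∈ A
          · simp only [Set.indicator_apply, h, if_pos, if_true]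
            rw [hfS' ω h]
          · simp [Set.indicator_apply, h]
        have e2 : cexp p
            (fun ω => (postSigSet p σ τ Y Set.univ ω - postRect p σ τ Y S' Set.univ) ^ 2) A
            = cexp p (fun ω => (val (σ ω) - cexp p Y A) ^ 2) A := by
          rw [cexp, cexp]
          congr 1
          apply Finset.sum_congr rfl
          intro ω _
          by_cases h : ω ∈ A
          · simp only [Set.indicator_apply, h, if_pos, if_true]
            rw [hRHS ω h]
          · simp [Set.indicator_apply, h]
        have e3 := hRS S' Set.univ
        rw [hsetA] at e3
        calc cexp p f A
            ≤ cexp p (fun ω => (postSigSet p σ τ Y Set.univ ω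
                - postRect p σ τ Y S' Set.univ) ^ 2) A := by rw [e1]; exact e3
          _ = cexp p (fun ω => (val (σ ω) - cexp p Y A) ^ 2) A := e2
          _ ≤ ε ^ 2 := by
              have hcexp : cexp p (fun ω => (val (σ ω) - cexp p Y A) ^ 2) A
                  = (∑ ω ∈ Finset.univ.filter (· ∈ A), p ω * (val (σ ω) - cexp p Y A) ^ 2)
                    / (∑ ω ∈ Finset.univ.filter (· ∈ A), p ω) := by
                rw [cexp]
                congr 1
                · rw [Finset.sum_filter]
                  exact Finset.sum_congr rfl fun ω _ => by
                    by_cases h : ω ∈ A <;> simp [Set.indicator_apply, h]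
                · rw [Finset.sum_filter]
                  exact Finset.sum_congr rfl fun ω _ => by
                    by_cases h : ω ∈ A <;> simp [Set.indicator_apply, h]
              rw [hcexp, div_le_iff₀ h0]
              calc ∑ ω ∈ Finset.univ.filter (· ∈ A), p ω * (val (σ ω) - cexp p Y A) ^ 2
                  ≤ ∑ ω ∈ Finset.univ.filter (· ∈ A), p ω * ε ^ 2 :=
                    Finset.sum_le_sum fun ω hω =>
                      mul_le_mul_of_nonneg_left
                        (hptbound ω (Finset.mem_filter.mp hω).2) (hp ω)
                _ = ε ^ 2 * ∑ ω ∈ Finset.univ.filter (· ∈ A), p ω := by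
                    rw [Finset.mul_sum]
                    exact Finset.sum_congr rfl fun ω _ => mul_comm _ _
      -- convert back to sums
      have hcexpf' : cexp p f A = (∑ ω ∈ Finset.univ.filter (· ∈ A), p ω * f ω)
          / (∑ ω ∈ Finset.univ.filter (· ∈ A), p ω) := by
        rw [cexp]
        congr 1
        · rw [Finset.sum_filter]
          exact Finset.sum_congr rfl fun ω _ => by
            by_cases h : ω ∈ A <;> simp [Set.indicator_apply, h]
        · rw [Finset.sum_filter]
          exact Finset.sum_congr rfl fun ω _ => by
            by_cases h : ω ∈ A <;> simp [Set.indicator_apply, h]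
      rw [hcexpf', div_le_iff₀ h0] at hcexpf
      rw [hAfilter (fun ω => p ω * f ω), hAfilter p]
      exact hcexpf
  -- put classes together
  have decomp : pexp p f = ∑ k ∈ Finset.univ.image m,
      ∑ ω ∈ Finset.univ.filter (fun ω => m ω = k), p ω * f ω := by
    rw [pexp]
    exact (Finset.sum_fiberwise_of_maps_to
      (fun ω _ => Finset.mem_image_of_mem m (Finset.mem_univ ω)) _).symm
  have decomp1 : (1 : ℝ) = ∑ k ∈ Finset.univ.image m,
      ∑ ω ∈ Finset.univ.filter (fun ω => m ω = k), p ω := by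
    rw [← hp1]
    exact (Finset.sum_fiberwise_of_maps_to
      (fun ω _ => Finset.mem_image_of_mem m (Finset.mem_univ ω)) _).symm
  calc pexp p f
      = ∑ k ∈ Finset.univ.image m,
          ∑ ω ∈ Finset.univ.filter (fun ω => m ω = k), p ω * f ω := decomp
    _ ≤ ∑ k ∈ Finset.univ.image m,
          ε ^ 2 * ∑ ω ∈ Finset.univ.filter (fun ω => m ω = k), p ω :=
        Finset.sum_le_sum fun k _ => key k
    _ = ε ^ 2 * ∑ k ∈ Finset.univ.image m,
          ∑ ω ∈ Finset.univ.filter (fun ω => m ω = k), p ω := by rw [Finset.mul_sum]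
    _ = ε ^ 2 * 1 := by rw [← decomp1]
    _ = ε ^ 2 := mul_one _
end

section
/- Suppose (g, 𝒟) satisfies rectangle substitutes, where g: S × T → {0,1} and 𝒟 is a distribution over S × T, and Y = g(σ,τ). If a two-round protocol has Alice send μ_σ rounded to a multiple of ε and Bob reply with μ_{Sτ} rounded to a multiple of ε (call it B), then Pr[|B − g(σ,τ)| ≥ 1/2] ≤ 8ε². Hence rounding B to {0,1} computes g correctly with probability at least 1 − 8ε². -/
/-!
Let `F = (μ_{στ} - μ_{Sτ})²`, where `S` is the cell of signals whose `μ_σ` rounds to the same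
multiple of `ε` as Alice's. On each cell, rectangle substitutes with `T' = T` bounds `E[F | cell]`
by the conditional mean squared deviation of `μ_σ` from its cell mean (which is `μ_{ST}`, by the
tower property); as `μ_σ` stays within `ε/2` of the cell's rounded value, this is at most `ε²/4`,
so `E[F] ≤ ε²/4`. Since `Y` is a function of `(σ, τ)`, `μ_{στ} = g(σ, τ)` almost surely, and
Bob's rounding moves `μ_{Sτ}` by at most `ε/2`; hence `|B - g| ≥ 1/2` forces `1 ≤ 8F + 2ε²`,
and Markov's inequality gives `Pr[|B - g| ≥ 1/2] ≤ 8 E[F] + 2ε² ≤ 4ε²`.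
-/

open Finset Set

variable {Ω S T : Type*}

theorem abs_sub_mul_round_div_le {ε : ℝ} (hε : 0 < ε) (x : ℝ) :
    |x - ε * round (x / ε)| ≤ ε / 2 := by
  have hfactor : x - ε * round (x / ε) = ε * (x / ε - round (x / ε)) := by
    field_simp
  rw [hfactor, abs_mul, abs_of_pos hε]
  linarith [mul_le_mul_of_nonneg_left (abs_sub_round (x / ε)) hε.le]

theorem one_le_of_half_le_abs_sub {b x y ε : ℝ} (hby : 1 / 2 ≤ |b - y|) (hbx : |b - x| ≤ ε / 2) :
    1 ≤ 8 * (y - x) ^ 2 + 2 * ε ^ 2 := by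
  have hby' : 1 / 4 ≤ (b - y) ^ 2 := by nlinarith [sq_abs (b - y)]
  have hbx' : (b - x) ^ 2 ≤ ε ^ 2 / 4 := by nlinarith [sq_abs (b - x), abs_nonneg (b - x)]
  nlinarith [sq_nonneg (b - x + (y - x))]

section ConditionalExpectation

variable {κ : Type*} [Fintype Ω] {p : Ω → ℝ}

theorem sum_indicator_nonneg (hp : ∀ ω, 0 ≤ p ω) (A : Set Ω) : 0 ≤ ∑ ω, A.indicator p ω :=
  sum_nonneg fun ω _ => indicator_nonneg (fun ω _ => hp ω) ω

theorem cexp_mul_sum_indicator (hp : ∀ ω, 0 ≤ p ω) (f : Ω → ℝ) (A : Set Ω) :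
    cexp p f A * ∑ ω, A.indicator p ω = ∑ ω, A.indicator (fun ω => p ω * f ω) ω := by
  rcases eq_or_ne (∑ ω, A.indicator p ω) 0 with h | h
  · have hzero : ∀ ω, A.indicator p ω = 0 := fun ω =>
      (sum_eq_zero_iff_of_nonneg fun ω _ => indicator_nonneg (fun ω _ => hp ω) ω).1 h ω
        (mem_univ ω)
    simp only [mul_zero, indicator_mul_left, hzero, zero_mul, sum_const_zero]
  · exact div_mul_cancel₀ _ h

theorem cexp_congr {f g : Ω → ℝ} {A : Set Ω} (h : EqOn f g A) : cexp p f A = cexp p g A := by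
  unfold cexp
  rw [indicator_congr fun ω hω => congrArg (p ω * ·) (h hω)]

theorem cexp_eq_of_eqOn_const {f : Ω → ℝ} {A : Set Ω} {c : ℝ} (hA : ∑ ω, A.indicator p ω ≠ 0)
    (h : EqOn f (fun _ => c) A) : cexp p f A = c := by
  rw [cexp_congr h, cexp]
  simp only [indicator_mul_left, ← sum_mul]
  exact mul_div_cancel_left₀ c hA

theorem cexp_le_of_forall_le (hp : ∀ ω, 0 ≤ p ω) {f : Ω → ℝ} {A : Set Ω} {c : ℝ} (hc : 0 ≤ c)
    (h : ∀ ω ∈ A, f ω ≤ c) : cexp p f A ≤ c := by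
  rcases (sum_indicator_nonneg hp A).eq_or_lt with h0 | hpos
  · simp [cexp, ← h0, hc]
  refine le_of_mul_le_mul_right ?_ hpos
  rw [cexp_mul_sum_indicator hp, mul_sum]
  refine sum_le_sum fun ω _ => ?_
  by_cases hω : ω ∈ A
  · simp only [indicator_of_mem hω, mul_comm c]
    exact mul_le_mul_of_nonneg_left (h ω hω) (hp ω)
  · simp [indicator_of_notMem hω]

theorem cexp_sq_sub_cexp_le (hp : ∀ ω, 0 ≤ p ω) (f : Ω → ℝ) (A : Set Ω) (c : ℝ) :
    cexp p (fun ω => (f ω - cexp p f A) ^ 2) A ≤ cexp p (fun ω => (f ω - c) ^ 2) A := by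
  set m := cexp p f A
  rcases (sum_indicator_nonneg hp A).eq_or_lt with h0 | hpos
  · simp [cexp, ← h0]
  refine le_of_mul_le_mul_right ?_ hpos
  rw [cexp_mul_sum_indicator hp, cexp_mul_sum_indicator hp]
  have hmean : ∑ ω, A.indicator p ω * f ω = m * ∑ ω, A.indicator p ω := by
    simp only [cexp_mul_sum_indicator hp, indicator_mul_left, m]
  have hgap : ∑ ω, A.indicator p ω * (f ω - c) ^ 2
      = ∑ ω, A.indicator p ω * (f ω - m) ^ 2 + (m - c) ^ 2 * ∑ ω, A.indicator p ω :=
    calc _ = ∑ ω, (A.indicator p ω * (f ω - m) ^ 2 + 2 * (m - c) * (A.indicator p ω * f ω)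
            + (c ^ 2 - m ^ 2) * A.indicator p ω) := sum_congr rfl fun ω _ => by ring
      _ = _ := by
        rw [sum_add_distrib, sum_add_distrib, ← mul_sum, ← mul_sum, hmean]
        ring
  simp only [indicator_mul_left, hgap]
  exact le_add_of_nonneg_right (by positivity)

theorem cexp_sq_sub_cexp_le_sq (hp : ∀ ω, 0 ≤ p ω) {f : Ω → ℝ} {A : Set Ω} {c r : ℝ}
    (h : ∀ ω ∈ A, |f ω - c| ≤ r) : cexp p (fun ω => (f ω - cexp p f A) ^ 2) A ≤ r ^ 2 :=
  (cexp_sq_sub_cexp_le hp f A c).trans <| cexp_le_of_forall_le hp (sq_nonneg r) fun ω hω =>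
    sq_le_sq' (abs_le.1 (h ω hω)).1 (abs_le.1 (h ω hω)).2

theorem sum_mul_cexp_fiber (hp : ∀ ω, 0 ≤ p ω) (m : Ω → κ) (f : Ω → ℝ) :
    ∑ ω, p ω * cexp p f {ω' | m ω' = m ω} = ∑ ω, p ω * f ω := by
  classical
  have hmaps : ∀ ω ∈ (univ : Finset Ω), m ω ∈ Finset.univ.image m := fun ω _ =>
    mem_image_of_mem m (mem_univ ω)
  rw [← sum_fiberwise_of_maps_to hmaps, ← sum_fiberwise_of_maps_to hmaps]
  refine sum_congr rfl fun k _ => ?_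
  have hfiber (h : Ω → ℝ) : ∑ ω with m ω = k, h ω = ∑ ω, {ω' | m ω' = k}.indicator h ω :=
    (sum_indicator_eq_sum_filter _ (fun _ => h) (fun _ => {ω' | m ω' = k}) id).symm
  calc ∑ ω with m ω = k, p ω * cexp p f {ω' | m ω' = m ω}
      = ∑ ω with m ω = k, p ω * cexp p f {ω' | m ω' = k} :=
        sum_congr rfl fun ω hω => by rw [(mem_filter.1 hω).2]
    _ = cexp p f {ω' | m ω' = k} * ∑ ω, {ω' | m ω' = k}.indicator p ω := by
        rw [← sum_mul, hfiber, mul_comm]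
    _ = ∑ ω with m ω = k, p ω * f ω := by rw [cexp_mul_sum_indicator hp, hfiber]

theorem pexp_le_of_cexp_fiber_le (hp : ∀ ω, 0 ≤ p ω) (m : Ω → κ) {f : Ω → ℝ} {c : ℝ}
    (h : ∀ ω, cexp p f {ω' | m ω' = m ω} ≤ c) : pexp p f ≤ c * ∑ ω, p ω := by
  rw [pexp, ← sum_mul_cexp_fiber hp m, mul_sum]
  exact sum_le_sum fun ω _ => by rw [mul_comm c]; exact mul_le_mul_of_nonneg_left (h ω) (hp ω)

theorem cexp_cexp_fiber (hp : ∀ ω, 0 ≤ p ω) (m : Ω → κ) (f : Ω → ℝ) (K : Set κ) :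
    cexp p (fun ω => cexp p f {ω' | m ω' = m ω}) {ω | m ω ∈ K} = cexp p f {ω | m ω ∈ K} := by
  have hpoint (ω : Ω) : {ω | m ω ∈ K}.indicator (fun ω => p ω * cexp p f {ω' | m ω' = m ω}) ω
      = p ω * cexp p ({ω | m ω ∈ K}.indicator f) {ω' | m ω' = m ω} := by
    by_cases hω : m ω ∈ K
    · rw [indicator_of_mem (show ω ∈ {ω | m ω ∈ K} from hω)]
      congr 1
      exact cexp_congr fun ω' hω' => (indicator_of_mem (s := {ω | m ω ∈ K})
        (by change m ω' ∈ K; rwa [show m ω' = m ω from hω']) f).symm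
    · rw [indicator_of_notMem (show ω ∉ {ω | m ω ∈ K} from hω), cexp_congr (g := fun _ => 0), cexp]
      · simp
      · exact fun ω' hω' => indicator_of_notMem (s := {ω | m ω ∈ K})
          (by change m ω' ∉ K; rwa [show m ω' = m ω from hω']) f
  have hnum : ∑ ω, {ω | m ω ∈ K}.indicator (fun ω => p ω * cexp p f {ω' | m ω' = m ω}) ω
      = ∑ ω, {ω | m ω ∈ K}.indicator (fun ω => p ω * f ω) ω := by
    simp only [hpoint, sum_mul_cexp_fiber hp, indicator_mul_right]
  exact congrArg (· / ∑ ω, {ω | m ω ∈ K}.indicator p ω) hnum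

theorem pexp_congr_of_pos (hp : ∀ ω, 0 ≤ p ω) {f g : Ω → ℝ} (h : ∀ ω, 0 < p ω → f ω = g ω) :
    pexp p f = pexp p g :=
  sum_congr rfl fun ω _ => (hp ω).eq_or_lt.elim (fun h0 => by rw [← h0, zero_mul, zero_mul])
    fun hpos => by rw [h ω hpos]

theorem sum_indicator_half_le_abs_sub_le (hp : ∀ ω, 0 ≤ p ω) {b x y : Ω → ℝ} {ε : ℝ}
    (hbx : ∀ ω, |b ω - x ω| ≤ ε / 2) :
    ∑ ω, {ω | 1 / 2 ≤ |b ω - y ω|}.indicator p ω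
      ≤ 8 * pexp p (fun ω => (y ω - x ω) ^ 2) + 2 * ε ^ 2 * ∑ ω, p ω := by
  rw [pexp, mul_sum, mul_sum, ← sum_add_distrib]
  refine sum_le_sum fun ω _ => ?_
  by_cases hω : ω ∈ {ω | 1 / 2 ≤ |b ω - y ω|}
  · rw [indicator_of_mem hω]
    nlinarith [mul_le_mul_of_nonneg_left (one_le_of_half_le_abs_sub hω (hbx ω)) (hp ω)]
  · rw [indicator_of_notMem hω]
    have := hp ω
    positivity

end ConditionalExpectation

section Protocol

variable {κ : Type*} [Fintype Ω] {p : Ω → ℝ} {σ : Ω → S} {τ : Ω → T} {Y : Ω → ℝ}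

theorem postBoth_eq_of_pos (hp : ∀ ω, 0 ≤ p ω) {G : S → T → ℝ}
    (hY : ∀ ω, Y ω = G (σ ω) (τ ω)) {ω : Ω} (hω : 0 < p ω) : postBoth p σ τ Y ω = Y ω := by
  set A := {ω' | σ ω' = σ ω ∧ τ ω' = τ ω}
  have hmass : 0 < ∑ ω, A.indicator p ω :=
    ((indicator_of_mem (show ω ∈ A from ⟨rfl, rfl⟩) p).symm ▸ hω).trans_le
      (single_le_sum (fun ω _ => indicator_nonneg (fun ω _ => hp ω) ω) (mem_univ ω))
  exact cexp_eq_of_eqOn_const hmass.ne' fun ω' hω' => by rw [hY, hY, hω'.1, hω'.2]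

theorem postSigSet_univ (ω : Ω) : postSigSet p σ τ Y Set.univ ω = postSig p σ Y ω := by
  simp only [postSigSet, postSig, Set.mem_univ, and_true]

theorem postRect_univ (K : Set S) : postRect p σ τ Y K Set.univ = cexp p Y {ω | σ ω ∈ K} := by
  simp only [postRect, Set.mem_univ, and_true]

theorem pexp_sq_postBoth_sub_postSetSig_le (hp : ∀ ω, 0 ≤ p ω)
    (hRS : RectangleSubstitutes p σ τ Y) (msg : S → κ) (c : κ → ℝ) {r : ℝ}
    (hc : ∀ ω, |postSig p σ Y ω - c (msg (σ ω))| ≤ r) :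
    pexp p (fun ω => (postBoth p σ τ Y ω - postSetSig p σ τ Y {s | msg s = msg (σ ω)} ω) ^ 2)
      ≤ r ^ 2 * ∑ ω, p ω := by
  refine pexp_le_of_cexp_fiber_le hp (fun ω => msg (σ ω)) fun ω₀ => ?_
  set K := {s | msg s = msg (σ ω₀)}
  have hcell : {ω | msg (σ ω) = msg (σ ω₀)} = {ω | σ ω ∈ K ∧ τ ω ∈ Set.univ} := by
    ext; simp [K]
  calc cexp p (fun ω => (postBoth p σ τ Y ω - postSetSig p σ τ Y {s | msg s = msg (σ ω)} ω) ^ 2)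
        {ω | msg (σ ω) = msg (σ ω₀)}
      = cexp p (fun ω => (postBoth p σ τ Y ω - postSetSig p σ τ Y K ω) ^ 2)
          {ω | σ ω ∈ K ∧ τ ω ∈ Set.univ} := by
        rw [hcell]
        exact cexp_congr fun ω hω => by simp only [K, show msg (σ ω) = msg (σ ω₀) from hω.1]
    _ ≤ cexp p (fun ω => (postSigSet p σ τ Y Set.univ ω - postRect p σ τ Y K Set.univ) ^ 2)
          {ω | σ ω ∈ K ∧ τ ω ∈ Set.univ} := hRS K Set.univ
    _ = cexp p (fun ω => (postSig p σ Y ω - cexp p (postSig p σ Y) {ω | σ ω ∈ K}) ^ 2)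
          {ω | σ ω ∈ K} := by
        simp only [postSigSet_univ, postRect_univ, Set.mem_univ, and_true]
        rw [← cexp_cexp_fiber hp σ Y K]
        rfl
    _ ≤ r ^ 2 := cexp_sq_sub_cexp_le_sq hp fun ω hω => by
        simpa only [show msg (σ ω) = msg (σ ω₀) from hω] using hc ω

end Protocol

theorem protocol_computes_g_general
    [Fintype Ω] (p : Ω → ℝ) (hp : ∀ ω, 0 ≤ p ω) (hp1 : ∑ ω, p ω = 1)
    (σ : Ω → S) (τ : Ω → T)
    (g : S → T → ℝ)
    (Y : Ω → ℝ) (hYg : ∀ ω, Y ω = g (σ ω) (τ ω))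
    (hRS : RectangleSubstitutes p σ τ Y)
    (ε : ℝ) (hε : 0 < ε)
    (val : S → ℝ) (hval : ∀ s, val s = cexp p Y {ω' | σ ω' = s})
    (Sε : Ω → Set S)
    (hSε : ∀ ω, Sε ω = {s | round (val s / ε) = round (val (σ ω) / ε)})
    (B : Ω → ℝ)
    (hB : ∀ ω, B ω = ε * round (postSetSig p σ τ Y (Sε ω) ω / ε)) :
    (∑ ω, ({ω' | (1:ℝ)/2 ≤ |B ω' - g (σ ω') (τ ω')|}.indicator p) ω) ≤ 8 * ε ^ 2 := by
  have hbob : ∀ ω, |B ω - postSetSig p σ τ Y (Sε ω) ω| ≤ ε / 2 := fun ω => by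
    rw [hB ω, abs_sub_comm]
    exact abs_sub_mul_round_div_le hε _
  have halice : ∀ ω, |postSig p σ Y ω - ε * round (val (σ ω) / ε)| ≤ ε / 2 := fun ω => by
    rw [postSig, ← hval]
    exact abs_sub_mul_round_div_le hε _
  have hmse := pexp_sq_postBoth_sub_postSetSig_le (τ := τ) hp hRS (fun s => round (val s / ε))
    (fun k => ε * k) halice
  simp only [← hSε, hp1, mul_one] at hmse
  calc _ ≤ 8 * pexp p (fun ω => (g (σ ω) (τ ω) - postSetSig p σ τ Y (Sε ω) ω) ^ 2)
          + 2 * ε ^ 2 * ∑ ω, p ω := sum_indicator_half_le_abs_sub_le hp hbob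
    _ = 8 * pexp p (fun ω => (postBoth p σ τ Y ω - postSetSig p σ τ Y (Sε ω) ω) ^ 2)
          + 2 * ε ^ 2 := by
        rw [hp1, mul_one, pexp_congr_of_pos hp fun ω hω => by
          rw [← hYg, ← postBoth_eq_of_pos hp hYg hω]]
    _ ≤ 8 * ε ^ 2 := by linarith [sq_nonneg ε]

/-- Communication-complexity corollary: if `(g, 𝒟)` satisfies rectangle substitutes,
`Y = g(σ,τ) ∈ {0,1}`, Alice sends `μ_σ` rounded to the nearest multiple of `ε`
(determining the rectangle of signals `Sε ω`) and Bob replies with `μ_{Sτ}` rounded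
to the nearest multiple of `ε` (call it `B`), then
`Pr[|B - g(σ,τ)| ≥ 1/2] ≤ 8 ε²`. -/
theorem protocol_computes_g
    [Fintype Ω] (p : Ω → ℝ) (hp : ∀ ω, 0 ≤ p ω) (hp1 : ∑ ω, p ω = 1)
    (σ : Ω → S) (τ : Ω → T)
    (g : S → T → ℝ) (hg : ∀ s t, g s t = 0 ∨ g s t = 1)
    (Y : Ω → ℝ) (hYg : ∀ ω, Y ω = g (σ ω) (τ ω))
    (hRS : RectangleSubstitutes p σ τ Y)
    (ε : ℝ) (hε : 0 < ε)
    (val : S → ℝ) (hval : ∀ s, val s = cexp p Y {ω' | σ ω' = s})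
    (Sε : Ω → Set S)
    (hSε : ∀ ω, Sε ω = {s | round (val s / ε) = round (val (σ ω) / ε)})
    (B : Ω → ℝ)
    (hB : ∀ ω, B ω = ε * round (postSetSig p σ τ Y (Sε ω) ω / ε)) :
    (∑ ω, ({ω' | (1:ℝ)/2 ≤ |B ω' - g (σ ω') (τ ω')|}.indicator p) ω) ≤ 8 * ε ^ 2 :=
  protocol_computes_g_general p hp hp1 σ τ g Y hYg hRS ε hε val hval Sε hSε B hB
end
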